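/- arXiv:2506.04899 — 4 statements merged into one kernel-verified Lean document; each statement's English description precedes it below -/
import Mathlib

section
/- Let R be a commutative ring with unique maximal ideal m, M a finitely generated R-module with tr_R(M) ⊆ m, and N an R-submodule of M with N ⊆ ((0 :_R m)·M). Then tr_R(M) = tr_R(M/N). -/
/-- Let `R` be a commutative ring with unique maximal ideal `m`, `M` a
finitely generated `R`-module with `tr_R(M) ⊆ m`, and `N ⊆ ((0 :_R m)·M)` an `R`-submodule
of `M`. Then `tr_R(M) = tr_R(M/N)`. -/
theorem traceIdeal_quotient_eq {R : Type u} [CommRing R] [IsLocalRing R]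
    (M : Type v) [AddCommGroup M] [Module R M] [Module.Finite R M]
    (htr : (⨆ φ : M →ₗ[R] R, LinearMap.range φ) ≤ IsLocalRing.maximalIdeal R)
    (N : Submodule R M)
    (hN : N ≤ (IsLocalRing.maximalIdeal R).annihilator • (⊤ : Submodule R M)) :
    (⨆ φ : M →ₗ[R] R, LinearMap.range φ)
      = ⨆ ψ : (M ⧸ N) →ₗ[R] R, LinearMap.range ψ := by
  apply le_antisymm
  · refine iSup_le fun φ => ?_
    have hker : N ≤ LinearMap.ker φ := by
      refine hN.trans (Submodule.smul_le.2 fun a ha x _ => ?_)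
      simp only [LinearMap.mem_ker, map_smul, smul_eq_mul]
      exact Submodule.mem_annihilator.1 ha (φ x)
        (htr (le_iSup (fun φ : M →ₗ[R] R => LinearMap.range φ) φ
          (LinearMap.mem_range_self φ x)))
    refine le_trans ?_ (le_iSup _ (N.liftQ φ hker))
    rintro r ⟨x, rfl⟩
    exact ⟨N.mkQ x, rfl⟩
  · refine iSup_le fun ψ => ?_
    refine le_trans ?_ (le_iSup _ (ψ ∘ₗ N.mkQ))
    rintro r ⟨y, rfl⟩
    obtain ⟨x, rfl⟩ := N.mkQ_surjective y
    exact ⟨x, rfl⟩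
end

section
/- Let A and B be positively graded Noetherian rings over a field k = A_0 = B_0, with natural projections f : A → k and g : B → k, and let R = A ×_k B be the fiber product. If I ⊊ A is a graded (proper) ideal of A and J ⊊ B is a graded (proper) ideal of B, then the extensions satisfy IR ∩ JR = (0), i.e. IR + JR = IR ⊕ JR inside R. -/
/-! Since `A₀ = k` is a field, a proper homogeneous ideal `I` has no nonzero element of degree
zero, so it lies in the irrelevant ideal, which `f` kills. As `ι₁ a = (a, f a)`, every element of
`IR` then has vanishing `B`-coordinate; symmetrically every element of `JR` has vanishing
`A`-coordinate, so an element of `IR ∩ JR` is zero. -/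

noncomputable section

/-- The fiber product `A ×ₖ B = {(a,b) : f a = g b}`, as a subalgebra of `A × B`. -/
def fiberProd {k A B : Type*} [CommSemiring k] [Semiring A] [Semiring B]
    [Algebra k A] [Algebra k B] (f : A →ₐ[k] k) (g : B →ₐ[k] k) : Subalgebra k (A × B) :=
  AlgHom.equalizer (f.comp (AlgHom.fst k A B)) (g.comp (AlgHom.snd k A B))

/-- The canonical map `ι₁ : A → A ×ₖ B`, `a ↦ (a, f a)`. -/
def fiberProdInl {k A B : Type*} [CommSemiring k] [Semiring A] [Semiring B]
    [Algebra k A] [Algebra k B] (f : A →ₐ[k] k) (g : B →ₐ[k] k) :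
    A →ₐ[k] fiberProd f g :=
  AlgHom.codRestrict ((AlgHom.id k A).prod ((Algebra.ofId k B).comp f)) (fiberProd f g)
    (fun a => by first | simp [fiberProd, AlgHom.mem_equalizer, Algebra.ofId_apply, AlgHom.commutes] | (change f a = g (algebraMap k B (f a)); exact (g.commutes (f a)).symm))

/-- The canonical map `ι₂ : B → A ×ₖ B`, `b ↦ (g b, b)`. -/
def fiberProdInr {k A B : Type*} [CommSemiring k] [Semiring A] [Semiring B]
    [Algebra k A] [Algebra k B] (f : A →ₐ[k] k) (g : B →ₐ[k] k) :
    B →ₐ[k] fiberProd f g :=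
  AlgHom.codRestrict (((Algebra.ofId k A).comp g).prod (AlgHom.id k B)) (fiberProd f g)
    (fun b => by first | simp [fiberProd, AlgHom.mem_equalizer, Algebra.ofId_apply, AlgHom.commutes] | (change f (algebraMap k A (g b)) = g b; exact f.commutes (g b)))

theorem Ideal.IsHomogeneous.le_irrelevant {ι k A : Type*} [DecidableEq ι] [AddCommMonoid ι]
    [PartialOrder ι] [CanonicallyOrderedAdd ι] [Field k] [Semiring A] [Algebra k A]
    (𝒜 : ι → Submodule k A) [GradedAlgebra 𝒜]
    (h𝒜 : 𝒜 0 ≤ LinearMap.range (Algebra.linearMap k A))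
    {I : Ideal A} (hI : I.IsHomogeneous 𝒜) (hI_ne_top : I ≠ ⊤) :
    I ≤ (HomogeneousIdeal.irrelevant 𝒜).toIdeal := by
  intro a ha
  obtain ⟨c, hc⟩ := h𝒜 (DirectSum.decompose 𝒜 a 0).2
  have hc_mem : algebraMap k A c ∈ I := hc ▸ hI 0 ha
  have hc_zero : c = 0 := by
    by_contra hc_ne
    exact hI_ne_top (I.eq_top_of_isUnit_mem hc_mem ((isUnit_iff_ne_zero.2 hc_ne).map _))
  change (DirectSum.decompose 𝒜 a 0 : A) = 0
  rw [← hc, Algebra.linearMap_apply, hc_zero, map_zero]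

theorem HomogeneousIdeal.irrelevant_le_ker {ι k A : Type*} [DecidableEq ι] [AddCommMonoid ι]
    [PartialOrder ι] [CanonicallyOrderedAdd ι] [CommSemiring k] [Semiring A] [Algebra k A]
    (𝒜 : ι → Submodule k A) [GradedAlgebra 𝒜] {f : A →ₐ[k] k}
    (hf : ∀ i, 0 < i → ∀ a ∈ 𝒜 i, f a = 0) :
    (HomogeneousIdeal.irrelevant 𝒜).toIdeal ≤ RingHom.ker f :=
  (HomogeneousIdeal.toIdeal_irrelevant_le 𝒜).2 fun i hi a ha => hf i hi a ha

section FiberProd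

variable {k A B : Type*} [CommSemiring k] [Semiring A] [Semiring B] [Algebra k A] [Algebra k B]
  {f : A →ₐ[k] k} {g : B →ₐ[k] k}

theorem map_fiberProdInl_le_ker_snd {I : Ideal A} (hI : I ≤ RingHom.ker f) :
    Ideal.map (fiberProdInl f g) I ≤ RingHom.ker ((AlgHom.snd k A B).comp (fiberProd f g).val) := by
  rw [Ideal.map_le_iff_le_comap]
  intro a ha
  change algebraMap k B (f a) = 0
  rw [hI ha, map_zero]

theorem map_fiberProdInr_le_ker_fst {J : Ideal B} (hJ : J ≤ RingHom.ker g) :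
    Ideal.map (fiberProdInr f g) J ≤ RingHom.ker ((AlgHom.fst k A B).comp (fiberProd f g).val) := by
  rw [Ideal.map_le_iff_le_comap]
  intro b hb
  change algebraMap k A (g b) = 0
  rw [hJ hb, map_zero]

theorem fiberProd_map_inf_map_eq_bot_of_le_ker {I : Ideal A} {J : Ideal B}
    (hI : I ≤ RingHom.ker f) (hJ : J ≤ RingHom.ker g) :
    Ideal.map (fiberProdInl f g) I ⊓ Ideal.map (fiberProdInr f g) J = ⊥ := by
  rw [eq_bot_iff]
  rintro x ⟨hxI, hxJ⟩
  exact Subtype.ext (Prod.ext (map_fiberProdInr_le_ker_fst hJ hxJ)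
    (map_fiberProdInl_le_ker_snd hI hxI))

end FiberProd

theorem fiberProd_map_inf_map_eq_bot_general {k A B : Type*} [Field k] [CommRing A] [CommRing B]
    [Algebra k A] [Algebra k B]
    (𝒜 : ℕ → Submodule k A) (ℬ : ℕ → Submodule k B)
    [GradedAlgebra 𝒜] [GradedAlgebra ℬ]
    (h𝒜 : 𝒜 0 ≤ LinearMap.range (Algebra.linearMap k A))
    (hℬ : ℬ 0 ≤ LinearMap.range (Algebra.linearMap k B))
    (f : A →ₐ[k] k) (g : B →ₐ[k] k)
    (hf : ∀ i, 0 < i → ∀ a ∈ 𝒜 i, f a = 0)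
    (hg : ∀ i, 0 < i → ∀ b ∈ ℬ i, g b = 0)
    (I : Ideal A) (hI : I ≠ ⊤) (hIhom : I.IsHomogeneous 𝒜)
    (J : Ideal B) (hJ : J ≠ ⊤) (hJhom : J.IsHomogeneous ℬ) :
    Ideal.map (fiberProdInl f g) I ⊓ Ideal.map (fiberProdInr f g) J = ⊥ :=
  fiberProd_map_inf_map_eq_bot_of_le_ker
    ((hIhom.le_irrelevant 𝒜 h𝒜 hI).trans (HomogeneousIdeal.irrelevant_le_ker 𝒜 hf))
    ((hJhom.le_irrelevant ℬ hℬ hJ).trans (HomogeneousIdeal.irrelevant_le_ker ℬ hg))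

/-- Let `A`, `B` be positively graded Noetherian rings over a field
`k = A₀ = B₀`, with the canonical projections `f : A → k`, `g : B → k`, and let
`R = A ×ₖ B` be the fiber product. If `I ⊊ A` and `J ⊊ B` are proper graded ideals,
then `IR ∩ JR = (0)`, i.e. `IR + JR = IR ⊕ JR` in `R`. -/
theorem fiberProd_map_inf_map_eq_bot {k A B : Type*} [Field k] [CommRing A] [CommRing B]
    [Algebra k A] [Algebra k B] [IsNoetherianRing A] [IsNoetherianRing B]
    (𝒜 : ℕ → Submodule k A) (ℬ : ℕ → Submodule k B)
    [GradedAlgebra 𝒜] [GradedAlgebra ℬ]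
    (h𝒜 : 𝒜 0 ≤ LinearMap.range (Algebra.linearMap k A))
    (hℬ : ℬ 0 ≤ LinearMap.range (Algebra.linearMap k B))
    (f : A →ₐ[k] k) (g : B →ₐ[k] k)
    (hf : ∀ i, 0 < i → ∀ a ∈ 𝒜 i, f a = 0)
    (hg : ∀ i, 0 < i → ∀ b ∈ ℬ i, g b = 0)
    (I : Ideal A) (hI : I ≠ ⊤) (hIhom : I.IsHomogeneous 𝒜)
    (J : Ideal B) (hJ : J ≠ ⊤) (hJhom : J.IsHomogeneous ℬ) :
    Ideal.map (fiberProdInl f g) I ⊓ Ideal.map (fiberProdInr f g) J = ⊥ :=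
  fiberProd_map_inf_map_eq_bot_general 𝒜 ℬ h𝒜 hℬ f g hf hg I hI hIhom J hJ hJhom
end
end

section
/- Let A be a zero-dimensional Noetherian (positively graded) ring with graded maximal ideal m_A, and ω_A its canonical module. Then ((0 :_A m_A))·ω_A = (0 :_{ω_A} m_A); that is, the socle of ω_A equals the product of the socle of A with ω_A. -/
/-!
Since `A₀ = k`, every proper homogeneous ideal lies in `𝔪 = A₊`. In dimension zero the homogeneous
core of any prime is then maximal, hence equal to `𝔪`, so `𝔪` lies in the nilradical; being
finitely generated it is nilpotent, and the socle `(0 : 𝔪)` of `A` contains some `s ≠ 0`.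
A functional `φ ∈ Hom_k(A, k)` killed by `𝔪` vanishes on `𝔪`, and since `A = k + 𝔪` it is
determined by `φ 1`; choosing `g` with `g s = 1`, it is therefore `s • (φ 1 • g)`.
-/

open HomogeneousIdeal

theorem Submodule.annihilator_smul_top_le_torsionBySet {R M : Type*} [CommRing R]
    [AddCommGroup M] [Module R M] (I : Ideal R) :
    I.annihilator • (⊤ : Submodule R M) ≤ Submodule.torsionBySet R M I :=
  Submodule.smul_le.mpr fun r hr x _ ↦ (Submodule.mem_torsionBySet_iff _ _).mpr fun ⟨a, ha⟩ ↦ by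
    rw [smul_smul, mul_comm, ← smul_eq_mul, Submodule.mem_annihilator.mp hr a ha, zero_smul]

theorem Ideal.annihilator_ne_bot_of_isNilpotent {R : Type*} [CommRing R] [Nontrivial R]
    {I : Ideal R} (hI : IsNilpotent I) : I.annihilator ≠ ⊥ := by
  classical
  have hn : I ^ Nat.find hI = ⊥ := Nat.find_spec hI
  obtain ⟨n, hn_eq⟩ : ∃ n, Nat.find hI = n + 1 :=
    Nat.exists_eq_succ_of_ne_zero fun h ↦ by simp [h] at hn
  have hpow_ne : I ^ n ≠ ⊥ := Nat.find_min hI (by omega)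
  have hpow_le : I ^ n ≤ I.annihilator := by
    rw [Submodule.le_annihilator_iff, smul_eq_mul, ← pow_succ, ← hn_eq, hn]
  exact fun h ↦ hpow_ne (le_bot_iff.mp (h ▸ hpow_le))

section Graded

variable {k A : Type*} [Field k] [CommRing A] [Algebra k A]
  (𝒜 : ℕ → Submodule k A) [GradedAlgebra 𝒜]

theorem exists_algebraMap_eq_proj_zero (h𝒜 : 𝒜 0 ≤ LinearMap.range (Algebra.linearMap k A))
    (a : A) : ∃ c : k, algebraMap k A c = GradedRing.proj 𝒜 0 a :=
  h𝒜 (by rw [GradedRing.proj_apply]; exact SetLike.coe_mem _)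

theorem sub_proj_zero_mem_irrelevant (a : A) : a - GradedRing.proj 𝒜 0 a ∈ 𝒜₊ := by
  rw [mem_irrelevant_iff, map_sub, sub_eq_zero, GradedRing.proj_apply, GradedRing.proj_apply,
    DirectSum.decompose_of_mem_same 𝒜 (SetLike.coe_mem _)]

theorem exists_sub_algebraMap_mem_irrelevant
    (h𝒜 : 𝒜 0 ≤ LinearMap.range (Algebra.linearMap k A)) (a : A) :
    ∃ c : k, a - algebraMap k A c ∈ (𝒜₊).toIdeal := by
  obtain ⟨c, hc⟩ := exists_algebraMap_eq_proj_zero 𝒜 h𝒜 a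
  exact ⟨c, hc ▸ sub_proj_zero_mem_irrelevant 𝒜 a⟩

theorem HomogeneousIdeal.toIdeal_le_irrelevant_of_ne_top
    (h𝒜 : 𝒜 0 ≤ LinearMap.range (Algebra.linearMap k A)) (I : HomogeneousIdeal 𝒜)
    (hI : I.toIdeal ≠ ⊤) : I.toIdeal ≤ (𝒜₊).toIdeal := by
  intro x hx
  obtain ⟨c, hc⟩ := exists_algebraMap_eq_proj_zero 𝒜 h𝒜 x
  rw [HomogeneousIdeal.mem_iff, mem_irrelevant_iff, ← hc]
  by_contra hc0
  replace hc0 : c ≠ 0 := by rintro rfl; exact hc0 (map_zero _)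
  have hproj : GradedRing.proj 𝒜 0 x ∈ I.toIdeal := I.isHomogeneous 0 hx
  exact hI (Ideal.eq_top_of_isUnit_mem _ (hc ▸ hproj) ((isUnit_iff_ne_zero.mpr hc0).map _))

theorem irrelevant_ne_top [Nontrivial A] : (𝒜₊).toIdeal ≠ ⊤ := by
  rw [Ne, Ideal.eq_top_iff_one, HomogeneousIdeal.mem_iff, mem_irrelevant_iff,
    GradedRing.proj_apply, DirectSum.decompose_of_mem_same 𝒜 SetLike.GradedOne.one_mem]
  exact one_ne_zero

variable [Ring.KrullDimLE 0 A]

theorem irrelevant_le_of_isPrime (h𝒜 : 𝒜 0 ≤ LinearMap.range (Algebra.linearMap k A))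
    (P : Ideal A) [hP : P.IsPrime] : (𝒜₊).toIdeal ≤ P := by
  have : Nontrivial A :=
    nontrivial_of_ne 0 1 fun h ↦ hP.ne_top ((Ideal.eq_top_iff_one P).mpr (h ▸ P.zero_mem))
  have hcore_max : (P.homogeneousCore 𝒜).toIdeal.IsMaximal := hP.homogeneousCore.isMaximal'
  have hcore_eq : (P.homogeneousCore 𝒜).toIdeal = (𝒜₊).toIdeal :=
    hcore_max.eq_of_le (irrelevant_ne_top 𝒜)
      (toIdeal_le_irrelevant_of_ne_top 𝒜 h𝒜 _ hcore_max.ne_top)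
  exact hcore_eq ▸ Ideal.toIdeal_homogeneousCore_le 𝒜 P

theorem isNilpotent_irrelevant [IsNoetherianRing A]
    (h𝒜 : 𝒜 0 ≤ LinearMap.range (Algebra.linearMap k A)) : IsNilpotent (𝒜₊).toIdeal := by
  obtain ⟨n, hn⟩ := IsNoetherianRing.isNilpotent_nilradical A
  have hle : (𝒜₊).toIdeal ≤ nilradical A := by
    rw [nilradical_eq_sInf]
    exact le_sInf fun P (hP : P.IsPrime) ↦ irrelevant_le_of_isPrime 𝒜 h𝒜 P
  exact ⟨n, le_bot_iff.mp ((Ideal.pow_right_mono hle n).trans_eq hn)⟩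

end Graded

section MatlisDual

variable {k A ω : Type*} [Field k] [CommRing A] [Algebra k A]
  [AddCommGroup ω] [Module A ω] [Module k ω] {𝔪 : Ideal A}

theorem LinearMap.eq_of_map_one_eq_of_forall_mem_eq_zero
    (h𝔪 : ∀ a : A, ∃ c : k, a - algebraMap k A c ∈ 𝔪) {φ ψ : A →ₗ[k] k}
    (hφ : ∀ a ∈ 𝔪, φ a = 0) (hψ : ∀ a ∈ 𝔪, ψ a = 0) (h1 : φ 1 = ψ 1) : φ = ψ := by
  ext a
  obtain ⟨c, hc⟩ := h𝔪 a
  have hsplit : a = (a - algebraMap k A c) + c • 1 := by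
    rw [Algebra.smul_def, mul_one, sub_add_cancel]
  rw [hsplit, map_add, map_add, hφ _ hc, hψ _ hc, map_smul, map_smul, h1]

theorem torsionBySet_le_annihilator_smul_top (e : ω ≃ₗ[k] (A →ₗ[k] k))
    (he : ∀ (a : A) (x : ω) (y : A), e (a • x) y = e x (a * y))
    (h𝔪 : ∀ a : A, ∃ c : k, a - algebraMap k A c ∈ 𝔪) (hsoc : 𝔪.annihilator ≠ ⊥) :
    Submodule.torsionBySet A ω 𝔪 ≤ 𝔪.annihilator • ⊤ := by
  intro x hx
  obtain ⟨s, hs, hs0⟩ := Submodule.exists_mem_ne_zero_of_ne_bot hsoc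
  obtain ⟨g, hg⟩ := Module.Projective.exists_dual_eq_one k hs0
  have hsa : ∀ a ∈ 𝔪, s * a = 0 := fun a ha ↦ by
    simpa [smul_eq_mul, mul_comm] using Submodule.mem_annihilator.mp hs a ha
  have hx_eq : x = s • e.symm (e x 1 • g) := by
    refine e.injective (LinearMap.eq_of_map_one_eq_of_forall_mem_eq_zero h𝔪 ?_ ?_ ?_)
    · intro a ha
      rw [← mul_one a, ← he, (Submodule.mem_torsionBySet_iff _ _).mp hx ⟨a, ha⟩, map_zero,
        LinearMap.zero_apply]
    · intro a ha
      rw [he, hsa a ha, map_zero]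
    · rw [he, mul_one, e.apply_symm_apply, LinearMap.smul_apply, hg, smul_eq_mul, mul_one]
  exact hx_eq ▸ Submodule.smul_mem_smul hs Submodule.mem_top

end MatlisDual

theorem socle_smul_canonicalModule_general {k A : Type*} [Field k] [CommRing A] [Algebra k A]
    [IsNoetherianRing A]
    (𝒜 : ℕ → Submodule k A) [GradedAlgebra 𝒜]
    (h𝒜 : 𝒜 0 ≤ LinearMap.range (Algebra.linearMap k A))
    (hdim : ringKrullDim A = 0)
    (ω : Type*) [AddCommGroup ω] [Module A ω] [Module k ω]
    -- `ω` is the (graded) Matlis dual of `A`, i.e. `ω ≅ Hom_k(A, k)` with the natural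
    -- `A`-module structure `(a • φ)(y) = φ(a * y)`
    (e : ω ≃ₗ[k] (A →ₗ[k] k))
    (he : ∀ (a : A) (x : ω) (y : A), e (a • x) y = e x (a * y)) :
    (HomogeneousIdeal.irrelevant 𝒜).toIdeal.annihilator • (⊤ : Submodule A ω)
      = Submodule.torsionBySet A ω ((HomogeneousIdeal.irrelevant 𝒜).toIdeal : Set A) := by
  have : Nontrivial A := not_subsingleton_iff_nontrivial.mp fun _ ↦ by
    simp [ringKrullDim_eq_bot_of_subsingleton] at hdim
  have : Ring.KrullDimLE 0 A := Ring.krullDimLE_iff.mpr hdim.le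
  exact le_antisymm (Submodule.annihilator_smul_top_le_torsionBySet _)
    (torsionBySet_le_annihilator_smul_top e he (exists_sub_algebraMap_mem_irrelevant 𝒜 h𝒜)
      (Ideal.annihilator_ne_bot_of_isNilpotent (isNilpotent_irrelevant 𝒜 h𝒜)))

/-- Let `A` be a zero-dimensional Noetherian positively graded ring (over a
field `k = A₀`) with graded maximal ideal `m_A`, and `ω_A` its canonical module (the graded
Matlis dual `Hom_k(A, k)` of `A`). Then `(0 :_A m_A)·ω_A = (0 :_{ω_A} m_A)`: the socle of
`ω_A` equals the product of the socle of `A` with `ω_A`. -/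
theorem socle_smul_canonicalModule {k A : Type*} [Field k] [CommRing A] [Algebra k A]
    [IsNoetherianRing A]
    (𝒜 : ℕ → Submodule k A) [GradedAlgebra 𝒜]
    (h𝒜 : 𝒜 0 ≤ LinearMap.range (Algebra.linearMap k A))
    (hdim : ringKrullDim A = 0)
    (ω : Type*) [AddCommGroup ω] [Module A ω] [Module k ω] [IsScalarTower k A ω]
    -- `ω` is the (graded) Matlis dual of `A`, i.e. `ω ≅ Hom_k(A, k)` with the natural
    -- `A`-module structure `(a • φ)(y) = φ(a * y)`
    (e : ω ≃ₗ[k] (A →ₗ[k] k))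
    (he : ∀ (a : A) (x : ω) (y : A), e (a • x) y = e x (a * y)) :
    (HomogeneousIdeal.irrelevant 𝒜).toIdeal.annihilator • (⊤ : Submodule A ω)
      = Submodule.torsionBySet A ω ((HomogeneousIdeal.irrelevant 𝒜).toIdeal : Set A) :=
  socle_smul_canonicalModule_general 𝒜 h𝒜 hdim ω e he
end

section
/- Let R be a Noetherian positively graded ring and M a (not necessarily finitely generated) graded R-module. Then the trace ideal computed using all module homomorphisms equals the ideal generated by images of graded homomorphisms: tr_R(M) = Σ_{φ ∈ Hom^gr_R(M,R)} φ(M), where Hom^gr denotes graded (degree-shifting homogeneous) homomorphisms. -/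
/-!
Every linear map `φ : M → R` splits into homogeneous pieces: for each shift `d`, the map sending a
homogeneous `x` of degree `n` to the degree-`n + d` component of `φ x` is again `R`-linear, because
multiplying by a homogeneous `r` of degree `i` moves both sides up by `i`. For homogeneous `x`, `φ x`
is the finite sum of its components, each of which is the value at `x` of one of these graded
pieces; so every element of the trace ideal lies in the ideal generated by images of graded maps.
-/

open DirectSum

namespace LinearMap

section AddLeftCancelMonoid

variable {ι R M : Type*} [DecidableEq ι] [AddLeftCancelMonoid ι] [CommRing R] [AddCommGroup M]
  [Module R M] (𝒜 : ι → AddSubgroup R) [GradedRing 𝒜] (ℳ : ι → AddSubgroup M) [Decomposition ℳ]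

def gradedComponentAddHom (φ : M →ₗ[R] R) (d : ι) : M →+ R :=
  (toAddMonoid fun n => (GradedRing.proj 𝒜 (n + d)).comp
    (φ.toAddMonoidHom.comp (ℳ n).subtype)).comp (decomposeAddEquiv ℳ).toAddMonoidHom

variable {𝒜 ℳ}

theorem gradedComponentAddHom_apply_of_mem (φ : M →ₗ[R] R) (d : ι) {n : ι} {x : M}
    (hx : x ∈ ℳ n) : gradedComponentAddHom 𝒜 ℳ φ d x = decompose 𝒜 (φ x) (n + d) := by
  simp [gradedComponentAddHom, decompose_of_mem ℳ hx]

theorem gradedComponentAddHom_smul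
    (hgr : ∀ (i j : ι), ∀ r ∈ 𝒜 i, ∀ x ∈ ℳ j, r • x ∈ ℳ (i + j))
    (φ : M →ₗ[R] R) (d : ι) (r : R) (x : M) :
    gradedComponentAddHom 𝒜 ℳ φ d (r • x) = r * gradedComponentAddHom 𝒜 ℳ φ d x := by
  induction r using Decomposition.inductionOn 𝒜 generalizing x with
  | zero => simp
  | @homogeneous i r =>
    induction x using Decomposition.inductionOn ℳ with
    | zero => simp
    | @homogeneous n x =>
      rw [gradedComponentAddHom_apply_of_mem φ d (hgr i n r r.2 x x.2),
        gradedComponentAddHom_apply_of_mem φ d x.2, map_smul, smul_eq_mul, add_assoc,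
        coe_decompose_mul_add_of_left_mem 𝒜 r.2]
    | add x y hx hy => rw [smul_add, map_add, hx, hy, map_add, mul_add]
  | add r s hr hs => rw [add_smul, map_add, hr, hs, add_mul]

def gradedComponent (hgr : ∀ (i j : ι), ∀ r ∈ 𝒜 i, ∀ x ∈ ℳ j, r • x ∈ ℳ (i + j))
    (φ : M →ₗ[R] R) (d : ι) : M →ₗ[R] R where
  toFun := gradedComponentAddHom 𝒜 ℳ φ d
  map_add' := map_add _
  map_smul' := gradedComponentAddHom_smul hgr φ d

theorem gradedComponent_apply_of_mem
    (hgr : ∀ (i j : ι), ∀ r ∈ 𝒜 i, ∀ x ∈ ℳ j, r • x ∈ ℳ (i + j))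
    (φ : M →ₗ[R] R) (d : ι) {n : ι} {x : M} (hx : x ∈ ℳ n) :
    gradedComponent hgr φ d x = decompose 𝒜 (φ x) (n + d) :=
  gradedComponentAddHom_apply_of_mem φ d hx

theorem gradedComponent_mem
    (hgr : ∀ (i j : ι), ∀ r ∈ 𝒜 i, ∀ x ∈ ℳ j, r • x ∈ ℳ (i + j))
    (φ : M →ₗ[R] R) (d : ι) {n : ι} {x : M} (hx : x ∈ ℳ n) :
    gradedComponent hgr φ d x ∈ 𝒜 (n + d) := by
  rw [gradedComponent_apply_of_mem hgr φ d hx]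
  exact SetLike.coe_mem _

end AddLeftCancelMonoid

variable {ι R M : Type*} [DecidableEq ι] [AddCommGroup ι] [CommRing R] [AddCommGroup M]
  [Module R M] {𝒜 : ι → AddSubgroup R} [GradedRing 𝒜] {ℳ : ι → AddSubgroup M} [Decomposition ℳ]

theorem apply_of_mem_eq_sum_gradedComponent
    (hgr : ∀ (i j : ι), ∀ r ∈ 𝒜 i, ∀ x ∈ ℳ j, r • x ∈ ℳ (i + j))
    [∀ (i) (x : 𝒜 i), Decidable (x ≠ 0)] (φ : M →ₗ[R] R) {n : ι} {x : M} (hx : x ∈ ℳ n) :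
    φ x = ∑ m ∈ (decompose 𝒜 (φ x)).support, gradedComponent hgr φ (m - n) x := by
  conv_lhs => rw [← sum_support_decompose 𝒜 (φ x)]
  refine Finset.sum_congr rfl fun m _ => ?_
  rw [gradedComponent_apply_of_mem hgr φ _ hx, add_sub_cancel]

end LinearMap

theorem traceIdeal_eq_sup_graded_homs_general {R : Type*} [CommRing R]
    (𝒜 : ℤ → AddSubgroup R) [GradedRing 𝒜]
    (M : Type*) [AddCommGroup M] [Module R M]
    (ℳ : ℤ → AddSubgroup M) [DirectSum.Decomposition ℳ]
    (hgr : ∀ (i j : ℤ), ∀ r ∈ 𝒜 i, ∀ x ∈ ℳ j, r • x ∈ ℳ (i + j)) :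
    (⨆ φ : M →ₗ[R] R, LinearMap.range φ)
      = ⨆ (φ : M →ₗ[R] R) (_ : ∃ d : ℤ, ∀ n : ℤ, ∀ x ∈ ℳ n, φ x ∈ 𝒜 (n + d)),
          LinearMap.range φ := by
  classical
  refine le_antisymm (iSup_le fun φ => ?_) (iSup₂_le fun φ _ => le_iSup _ φ)
  rintro _ ⟨x, rfl⟩
  induction x using Decomposition.inductionOn ℳ with
  | zero => simp
  | @homogeneous n x =>
    rw [LinearMap.apply_of_mem_eq_sum_gradedComponent hgr φ x.2]
    refine Submodule.sum_mem _ fun m _ => Submodule.mem_iSup_of_mem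
      (LinearMap.gradedComponent hgr φ (m - n)) (Submodule.mem_iSup_of_mem ?_ ⟨x, rfl⟩)
    exact ⟨m - n, fun k y hy => LinearMap.gradedComponent_mem hgr φ _ hy⟩
  | add x y hx hy => rw [map_add]; exact add_mem hx hy

/-- Let `R` be a Noetherian positively graded ring and `M` a (not necessarily
finitely generated) graded `R`-module. Then the trace ideal computed using all module
homomorphisms equals the ideal generated by the images of the graded (degree-shifting
homogeneous) homomorphisms `M → R`. -/
theorem traceIdeal_eq_sup_graded_homs {R : Type*} [CommRing R] [IsNoetherianRing R]
    (𝒜 : ℤ → AddSubgroup R) [GradedRing 𝒜]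
    (hpos : ∀ i : ℤ, i < 0 → 𝒜 i = ⊥)
    (M : Type*) [AddCommGroup M] [Module R M]
    (ℳ : ℤ → AddSubgroup M) [DirectSum.Decomposition ℳ]
    (hgr : ∀ (i j : ℤ), ∀ r ∈ 𝒜 i, ∀ x ∈ ℳ j, r • x ∈ ℳ (i + j)) :
    (⨆ φ : M →ₗ[R] R, LinearMap.range φ)
      = ⨆ (φ : M →ₗ[R] R) (_ : ∃ d : ℤ, ∀ n : ℤ, ∀ x ∈ ℳ n, φ x ∈ 𝒜 (n + d)),
          LinearMap.range φ :=
  traceIdeal_eq_sup_graded_homs_general 𝒜 M ℳ hgr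
end
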